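/- Let R_f ∈ ℝ, L_f ∈ ℝ with L_f ≠ 0, and let θ : ℝ → ℝ be differentiable with θ'(t) = ω(t). Let i, v, v_o : ℝ → ℝ³ with i differentiable, satisfying for all t the LC-filter inductor equation L_f·i'(t) = −R_f·i(t) + v(t) − v_o(t). Define i_dq0(t) = T(θ(t))·i(t), v_dq0(t) = T(θ(t))·v(t), v_o,dq0(t) = T(θ(t))·v_o(t). Then i_dq0 is differentiable and for all t: L_f·i_dq0'(t) = ω(t)·L_f·J̃·i_dq0(t) − R_f·i_dq0(t) + v_dq0(t) − v_o,dq0(t), where J̃ = [[0,1,0],[−1,0,0],[0,0,0]]. (This is the local dq-frame representation of the inverter filter inductor dynamics.) -/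

import Mathlib

/-! The Park matrix satisfies `dT/dθ = J̃ T`: its first two rows are a sine row and the
matching cosine row, and its last row is constant. The product rule then gives
`d/dt (T(θ) i) = ω J̃ T(θ) i + T(θ) i'`, and applying `T(θ)` to the filter equation
`L_f i' = -R_f i + v - v_o` turns the second term into the dq0 quantities. -/

open Real Matrix

/-- The Park transformation matrix. -/
noncomputable def Park (θ : ℝ) : Matrix (Fin 3) (Fin 3) ℝ :=
  Real.sqrt (2/3) •
    !![Real.sin θ, Real.sin (θ - 2*π/3), Real.sin (θ + 2*π/3);
       Real.cos θ, Real.cos (θ - 2*π/3), Real.cos (θ + 2*π/3);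
       1/Real.sqrt 2, 1/Real.sqrt 2, 1/Real.sqrt 2]

/-- The 3×3 matrix J̃ = [[0,1,0],[−1,0,0],[0,0,0]]. -/
def J3 : Matrix (Fin 3) (Fin 3) ℝ :=
  !![0, 1, 0; -1, 0, 0; 0, 0, 0]

theorem HasDerivAt.mulVec_apply {𝕜 m n : Type*} [NontriviallyNormedField 𝕜] [Fintype n]
    {A : 𝕜 → Matrix m n 𝕜} {A' : Matrix m n 𝕜} {x : 𝕜 → n → 𝕜} {x' : n → 𝕜} {t : 𝕜}
    (hA : ∀ j k, HasDerivAt (fun s => A s j k) (A' j k) t)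
    (hx : ∀ k, HasDerivAt (fun s => x s k) (x' k) t) (j : m) :
    HasDerivAt (fun s => (A s *ᵥ x s) j) ((A' *ᵥ x t + A t *ᵥ x') j) t := by
  simp only [mulVec, dotProduct, Pi.add_apply, ← Finset.sum_add_distrib]
  exact HasDerivAt.fun_sum fun k _ => (hA j k).mul (hx k)

theorem hasDerivAt_park_apply (θ : ℝ) (j k : Fin 3) :
    HasDerivAt (fun φ => Park φ j k) ((J3 * Park θ) j k) θ := by
  have hsin (c : ℝ) : HasDerivAt (fun φ => sin (φ + c)) (cos (θ + c)) θ := by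
    simpa using ((hasDerivAt_id θ).add_const c).sin
  have hcos (c : ℝ) : HasDerivAt (fun φ => cos (φ + c)) (-sin (θ + c)) θ := by
    simpa using ((hasDerivAt_id θ).add_const c).cos
  fin_cases j <;> fin_cases k <;>
    simp only [Park, J3, Matrix.smul_apply, mul_apply, Fin.sum_univ_three, of_apply, cons_val',
      cons_val, cons_val_zero, cons_val_one, cons_val_fin_one, smul_eq_mul, zero_mul, one_mul,
      neg_mul, zero_add, add_zero, ← mul_neg, sub_eq_add_neg, Fin.isValue, Fin.zero_eta,
      Fin.mk_one, Fin.reduceFinMk]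
  all_goals first
    | exact hasDerivAt_const _ _
    | exact (hasDerivAt_sin θ).const_mul _
    | exact (hasDerivAt_cos θ).const_mul _
    | exact (hsin _).const_mul _
    | exact (hcos _).const_mul _

theorem filter_dynamics_dq_frame_general (Rf Lf : ℝ)
    (θ ω : ℝ → ℝ) (hθ : ∀ t, HasDerivAt θ (ω t) t)
    (i i' v vo : ℝ → Fin 3 → ℝ)
    (hdiff : ∀ t j, HasDerivAt (fun s => i s j) (i' t j) t)
    (hfilter : ∀ t j, Lf * i' t j = -Rf * i t j + v t j - vo t j) :
    ∀ t : ℝ, ∃ idq' : Fin 3 → ℝ,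
      (∀ j, HasDerivAt (fun s => (Park (θ s)).mulVec (i s) j) (idq' j) t) ∧
      ∀ j, Lf * idq' j =
        ω t * Lf * (J3.mulVec ((Park (θ t)).mulVec (i t))) j
          - Rf * (Park (θ t)).mulVec (i t) j
          + (Park (θ t)).mulVec (v t) j
          - (Park (θ t)).mulVec (vo t) j := by
  intro t
  have hPark (j k : Fin 3) :
      HasDerivAt (fun s => Park (θ s) j k) ((ω t • (J3 * Park (θ t))) j k) t := by
    rw [Matrix.smul_apply, smul_eq_mul, mul_comm]
    exact (hasDerivAt_park_apply (θ t) j k).comp t (hθ t)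
  refine ⟨_, HasDerivAt.mulVec_apply hPark (hdiff t), fun j => ?_⟩
  have hfilter_dq :
      (Park (θ t) *ᵥ (Lf • i' t)) j = (Park (θ t) *ᵥ (-Rf • i t + v t - vo t)) j :=
    congrArg (fun x => (Park (θ t) *ᵥ x) j) (funext (hfilter t))
  simp only [mulVec_smul, mulVec_add, mulVec_sub, smul_mulVec, mulVec_mulVec, Pi.add_apply,
    Pi.sub_apply, Pi.smul_apply, smul_eq_mul] at hfilter_dq ⊢
  linear_combination hfilter_dq

/-- Local dq-frame representation of the inverter LC-filter inductor dynamics: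
if `L_f i' = -R_f i + v - v_o` componentwise and `θ' = ω`, then the Park-transformed
current `i_dq0 t = T(θ t) i t` satisfies
`L_f i_dq0' = ω L_f J̃ i_dq0 - R_f i_dq0 + v_dq0 - v_o_dq0`. -/
theorem filter_dynamics_dq_frame (Rf Lf : ℝ) (hLf : Lf ≠ 0)
    (θ ω : ℝ → ℝ) (hθ : ∀ t, HasDerivAt θ (ω t) t)
    (i i' v vo : ℝ → Fin 3 → ℝ)
    (hdiff : ∀ t j, HasDerivAt (fun s => i s j) (i' t j) t)
    (hfilter : ∀ t j, Lf * i' t j = -Rf * i t j + v t j - vo t j) :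
    ∀ t : ℝ, ∃ idq' : Fin 3 → ℝ,
      (∀ j, HasDerivAt (fun s => (Park (θ s)).mulVec (i s) j) (idq' j) t) ∧
      ∀ j, Lf * idq' j =
        ω t * Lf * (J3.mulVec ((Park (θ t)).mulVec (i t))) j
          - Rf * (Park (θ t)).mulVec (i t) j
          + (Park (θ t)).mulVec (v t) j
          - (Park (θ t)).mulVec (vo t) j :=
  filter_dynamics_dq_frame_general Rf Lf θ ω hθ i i' v vo hdiff hfilter
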